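/- Let L be an infinite locally compact Hausdorff topological space that is not compact. Then every somewhat regular closed linear subspace 𝒜 of C₀(L) is almost square: whenever n ∈ ℕ and x₁, …, xₙ ∈ 𝒜 have norm 1, there exists a sequence (y_k) in the closed unit ball of 𝒜 such that ‖xᵢ + y_k‖ → 1 and ‖xᵢ − y_k‖ → 1 as k → ∞ for every i ∈ {1, …, n}, and ‖y_k‖ → 1 as k → ∞. -/

import Mathlib

/-!
Given norm-one `x₁, …, xₙ` and `0 < ε < 1`, the set `C` where some `|xᵢ| ≥ ε` is compact, so its
complement is a non-empty open set and somewhat regularity yields a norm-one `g ∈ 𝒜` with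
`|g| ≤ ε` on `C`. Off `C` every `xᵢ` is `ε`-small, so the supports of `xᵢ` and `g` are
`ε`-almost disjoint and `‖xᵢ ± g‖` lies within `ε` of `1`. Letting `ε → 0` gives the sequence.
-/

open scoped ZeroAtInfty
open Filter Topology

/-- A linear subspace `𝒜` of `C₀(L, ℝ)` is *somewhat regular* if for every non-empty open
subset `V` of `L` and every `ε` with `0 < ε < 1` there is `f ∈ 𝒜` with `‖f‖ = 1` and
`|f x| ≤ ε` for every `x ∈ L \ V`. -/
def SomewhatRegular {L : Type*} [TopologicalSpace L]
    (𝒜 : Submodule ℝ C₀(L, ℝ)) : Prop :=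
  ∀ V : Set L, IsOpen V → V.Nonempty → ∀ ε : ℝ, 0 < ε → ε < 1 →
    ∃ f ∈ 𝒜, ‖f‖ = 1 ∧ ∀ x ∉ V, |f x| ≤ ε

namespace ZeroAtInftyContinuousMap

variable {α β : Type*} [TopologicalSpace α] [SeminormedAddCommGroup β]

theorem norm_apply_le (f : C₀(α, β)) (x : α) : ‖f x‖ ≤ ‖f‖ :=
  f.toBCF.norm_coe_le_norm x

theorem norm_le_of_forall_norm_apply_le {f : C₀(α, β)} {C : ℝ} (hC : 0 ≤ C)
    (h : ∀ x, ‖f x‖ ≤ C) : ‖f‖ ≤ C :=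
  (BoundedContinuousFunction.norm_le (f := f.toBCF) hC).2 h

theorem exists_lt_norm_apply {f : C₀(α, β)} {r : ℝ} (hr : 0 ≤ r) (h : r < ‖f‖) :
    ∃ x, r < ‖f x‖ := by
  by_contra! H
  exact h.not_ge (norm_le_of_forall_norm_apply_le hr H)

theorem isCompact_setOf_le_norm_apply (f : C₀(α, β)) {ε : ℝ} (hε : 0 < ε) :
    IsCompact {x | ε ≤ ‖f x‖} := by
  have hsmall : ∀ᶠ x in cocompact α, ‖f x‖ < ε :=
    (zero_at_infty f).norm.eventually (gt_mem_nhds (by simpa using hε))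
  obtain ⟨K, hK, hsub⟩ := mem_cocompact'.1 hsmall
  exact hK.of_isClosed_subset (isClosed_le continuous_const f.continuous.norm)
    fun x (hx : ε ≤ ‖f x‖) => hsub (not_lt.2 hx)

variable {f g : C₀(α, β)} {s : Set α} {ε : ℝ}

section AlmostDisjoint

variable (hε : 0 ≤ ε) (hfs : ∀ x ∉ s, ‖f x‖ ≤ ε) (hgs : ∀ x ∈ s, ‖g x‖ ≤ ε)
include hε hfs hgs

theorem norm_add_le_max_add : ‖f + g‖ ≤ max ‖f‖ ‖g‖ + ε := by
  refine norm_le_of_forall_norm_apply_le (by positivity) fun x => ?_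
  have hfx := norm_apply_le f x
  have hgx := norm_apply_le g x
  calc ‖(f + g) x‖ ≤ ‖f x‖ + ‖g x‖ := norm_add_le _ _
    _ ≤ max ‖f‖ ‖g‖ + ε := by
      by_cases hx : x ∈ s
      · linarith [hgs x hx, le_max_left ‖f‖ ‖g‖]
      · linarith [hfs x hx, le_max_right ‖f‖ ‖g‖]

theorem norm_sub_le_norm_add : ‖g‖ - ε ≤ ‖f + g‖ := by
  by_contra! h
  obtain ⟨x, hx⟩ := exists_lt_norm_apply (f := g) (r := ‖f + g‖ + ε) (by positivity)
    (by linarith)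
  -- `g` is large at `x`, so `x ∉ s`, where `f` is small
  have hxs : x ∉ s := fun hxs => by linarith [hgs x hxs, norm_nonneg (f + g)]
  have hfgx : ‖g x‖ ≤ ‖(f + g) x‖ + ‖f x‖ := by
    simpa using norm_sub_le (f x + g x) (f x)
  linarith [hfs x hxs, norm_apply_le (f + g) x]

theorem abs_norm_add_sub_one_le (hf : ‖f‖ ≤ 1) (hg : ‖g‖ = 1) : |‖f + g‖ - 1| ≤ ε := by
  have hupper := norm_add_le_max_add hε hfs hgs
  have hlower := norm_sub_le_norm_add hε hfs hgs
  rw [hg, max_eq_right hf] at hupper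
  rw [abs_sub_le_iff]
  constructor <;> linarith

theorem abs_norm_sub_sub_one_le (hf : ‖f‖ ≤ 1) (hg : ‖g‖ = 1) : |‖f - g‖ - 1| ≤ ε := by
  have := abs_norm_add_sub_one_le (g := -g) hε hfs
    (fun x hx => (norm_neg (g x)).trans_le (hgs x hx)) hf (by rwa [norm_neg])
  rwa [← sub_eq_add_neg] at this

end AlmostDisjoint

end ZeroAtInftyContinuousMap

open ZeroAtInftyContinuousMap in
theorem SomewhatRegular.exists_abs_norm_add_sub_one_le {L : Type*} [TopologicalSpace L]
    (hL : ¬ CompactSpace L) {𝒜 : Submodule ℝ C₀(L, ℝ)} (h𝒜 : SomewhatRegular 𝒜)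
    {ι : Type*} [Finite ι] (x : ι → C₀(L, ℝ)) (hx : ∀ i, ‖x i‖ ≤ 1) {ε : ℝ} (hε₀ : 0 < ε)
    (hε₁ : ε < 1) :
    ∃ g ∈ 𝒜, ‖g‖ = 1 ∧ ∀ i, |‖x i + g‖ - 1| ≤ ε ∧ |‖x i - g‖ - 1| ≤ ε := by
  set C := ⋃ i, {q | ε ≤ ‖x i q‖}
  have hC : IsCompact C := isCompact_iUnion fun i => isCompact_setOf_le_norm_apply (x i) hε₀
  have hCc : Cᶜ.Nonempty := Set.nonempty_compl.2 fun h => hL ⟨h ▸ hC⟩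
  have hC_closed : IsClosed C :=
    isClosed_iUnion_of_finite fun i => isClosed_le continuous_const (x i).continuous.norm
  obtain ⟨g, hg𝒜, hg, hg_off⟩ := h𝒜 Cᶜ hC_closed.isOpen_compl hCc ε hε₀ hε₁
  have hxC (i : ι) : ∀ q ∉ C, ‖x i q‖ ≤ ε := fun q hq =>
    (not_le.1 fun h => hq (Set.mem_iUnion.2 ⟨i, h⟩)).le
  have hgC : ∀ q ∈ C, ‖g q‖ ≤ ε := fun q hq => hg_off q (not_not_intro hq)
  exact ⟨g, hg𝒜, hg, fun i => ⟨abs_norm_add_sub_one_le hε₀.le (hxC i) hgC (hx i) hg,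
    abs_norm_sub_sub_one_le hε₀.le (hxC i) hgC (hx i) hg⟩⟩

theorem somewhat_regular_ASQ_general
    {L : Type*} [TopologicalSpace L]
    (hL : ¬ CompactSpace L)
    (𝒜 : Submodule ℝ C₀(L, ℝ))
    (h𝒜 : SomewhatRegular 𝒜)
    (n : ℕ) (x : Fin n → 𝒜) (hx : ∀ i, ‖x i‖ = 1) :
    ∃ y : ℕ → 𝒜,
      (∀ k, ‖y k‖ ≤ 1) ∧
      (∀ i, Tendsto (fun k => ‖x i + y k‖) atTop (𝓝 1)) ∧
      (∀ i, Tendsto (fun k => ‖x i - y k‖) atTop (𝓝 1)) ∧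
      Tendsto (fun k => ‖y k‖) atTop (𝓝 1) := by
  obtain ⟨ε, -, hε, hε₀⟩ := exists_seq_strictAnti_tendsto' (zero_lt_one' ℝ)
  choose g hg𝒜 hg hgx using fun k => h𝒜.exists_abs_norm_add_sub_one_le hL
    (fun i => (x i : C₀(L, ℝ))) (fun i => (hx i).le) (hε k).1 (hε k).2
  have tendsto_one (u : ℕ → ℝ) (hu : ∀ k, |u k - 1| ≤ ε k) : Tendsto u atTop (𝓝 1) :=
    tendsto_iff_dist_tendsto_zero.2 <|
      squeeze_zero (fun _ => dist_nonneg) (fun k => (Real.dist_eq _ _).trans_le (hu k)) hε₀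
  refine ⟨fun k => ⟨g k, hg𝒜 k⟩, fun k => (hg k).le, fun i => tendsto_one _ fun k => (hgx k i).1,
    fun i => tendsto_one _ fun k => (hgx k i).2, ?_⟩
  simp [hg]

/-- If `L` is non-compact, every somewhat regular closed linear subspace of `C₀(L)` is
almost square. -/
theorem somewhat_regular_ASQ
    {L : Type*} [TopologicalSpace L] [LocallyCompactSpace L] [T2Space L] [Infinite L]
    (hL : ¬ CompactSpace L)
    (𝒜 : Submodule ℝ C₀(L, ℝ)) (hclosed : IsClosed (𝒜 : Set C₀(L, ℝ)))
    (h𝒜 : SomewhatRegular 𝒜)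
    (n : ℕ) (x : Fin n → 𝒜) (hx : ∀ i, ‖x i‖ = 1) :
    ∃ y : ℕ → 𝒜,
      (∀ k, ‖y k‖ ≤ 1) ∧
      (∀ i, Tendsto (fun k => ‖x i + y k‖) atTop (𝓝 1)) ∧
      (∀ i, Tendsto (fun k => ‖x i - y k‖) atTop (𝓝 1)) ∧
      Tendsto (fun k => ‖y k‖) atTop (𝓝 1) :=
  somewhat_regular_ASQ_general hL 𝒜 h𝒜 n x hx
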